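/- Let g, d ∈ ℝ, let b : ℝ² → ℝ be smooth, and let u : ℝ × ℝ² → ℝ² and D : ℝ × ℝ² → ℝ be smooth with D(t,x) > 0 for all (t,x), satisfying everywhere the 1L√D motion equation ∂_t u + (u·∇)u = −g ∇(D − b) − (d²/6) ∇( D^{−1/2} ∂_t²(√D) ), where ∇ denotes the spatial gradient. Let γ : ℝ × ℝ → ℝ² be smooth with γ(t, s+2π) = γ(t,s) and ∂_t γ(t,s) = u(t, γ(t,s)). Then the circulation C(t) = ∫₀^{2π} ⟨ u(t, γ(t,s)), ∂_s γ(t,s) ⟩ ds is constant in t. -/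

import Mathlib

open MeasureTheory

/-- `i`-th spatial partial derivative of a scalar function on `ℝⁿ`. -/
noncomputable def pd {n : ℕ} (f : EuclideanSpace ℝ (Fin n) → ℝ) (i : Fin n)
    (x : EuclideanSpace ℝ (Fin n)) : ℝ :=
  fderiv ℝ f x (EuclideanSpace.single i 1)

/-- Divergence of a vector field on `ℝⁿ`. -/
noncomputable def sdiv {n : ℕ} (u : EuclideanSpace ℝ (Fin n) → EuclideanSpace ℝ (Fin n))
    (x : EuclideanSpace ℝ (Fin n)) : ℝ :=
  ∑ i, pd (fun y => u y i) i x

/-- Gradient of a scalar function on `ℝⁿ`. -/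
noncomputable def sgrad {n : ℕ} (f : EuclideanSpace ℝ (Fin n) → ℝ)
    (x : EuclideanSpace ℝ (Fin n)) : EuclideanSpace ℝ (Fin n) :=
  WithLp.toLp 2 (fun i => pd f i x)

/-- Time derivative `∂ₜv` of a time-dependent vector field. -/
noncomputable def tdV {n : ℕ} (v : ℝ × EuclideanSpace ℝ (Fin n) → EuclideanSpace ℝ (Fin n))
    (t : ℝ) (x : EuclideanSpace ℝ (Fin n)) : EuclideanSpace ℝ (Fin n) :=
  WithLp.toLp 2 (fun i => deriv (fun τ => v (τ, x) i) t)

/-- Directional spatial derivative `(u·∇)v` of a time-dependent vector field. -/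
noncomputable def advV {n : ℕ} (u v : ℝ × EuclideanSpace ℝ (Fin n) → EuclideanSpace ℝ (Fin n))
    (t : ℝ) (x : EuclideanSpace ℝ (Fin n)) : EuclideanSpace ℝ (Fin n) :=
  WithLp.toLp 2 (fun i => fderiv ℝ (fun y => v (t, y) i) x (u (t, x)))

/-- Derivative `∂ₜγ` of a time-dependent loop with respect to time. -/
noncomputable def tdLoop {n : ℕ} (γ : ℝ × ℝ → EuclideanSpace ℝ (Fin n)) (t s : ℝ) :
    EuclideanSpace ℝ (Fin n) :=
  WithLp.toLp 2 (fun i => deriv (fun τ => γ (τ, s) i) t)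

/-- Derivative `∂ₛγ` of a time-dependent loop with respect to its parameter. -/
noncomputable def sdLoop {n : ℕ} (γ : ℝ × ℝ → EuclideanSpace ℝ (Fin n)) (t s : ℝ) :
    EuclideanSpace ℝ (Fin n) :=
  WithLp.toLp 2 (fun i => deriv (fun σ => γ (t, σ) i) s)

open scoped RealInnerProductSpace

noncomputable abbrev E2 := EuclideanSpace ℝ (Fin 2)

section Aux
variable {E F : Type*} [NormedAddCommGroup E] [NormedSpace ℝ E]
  [NormedAddCommGroup F] [NormedSpace ℝ F]

lemma aux_fst {f : ℝ × E → F} {t : ℝ} {x : E} (hf : DifferentiableAt ℝ f (t, x)) :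
    HasDerivAt (fun τ => f (τ, x)) (fderiv ℝ f (t, x) (1, 0)) t := by
  have h1 : HasDerivAt (fun τ : ℝ => (τ, x)) ((1 : ℝ), (0 : E)) t :=
    (hasDerivAt_id t).prodMk (hasDerivAt_const t x)
  exact hf.hasFDerivAt.comp_hasDerivAt t h1

lemma aux_snd {f : ℝ × ℝ → F} {t s : ℝ} (hf : DifferentiableAt ℝ f (t, s)) :
    HasDerivAt (fun σ => f (t, σ)) (fderiv ℝ f (t, s) (0, 1)) s := by
  have h1 : HasDerivAt (fun σ : ℝ => (t, σ)) ((0 : ℝ), (1 : ℝ)) s :=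
    (hasDerivAt_const s t).prodMk (hasDerivAt_id s)
  exact hf.hasFDerivAt.comp_hasDerivAt s h1

lemma aux_snd' {f : ℝ × E → F} {t : ℝ} {x : E} (hf : DifferentiableAt ℝ f (t, x)) :
    HasFDerivAt (fun y => f (t, y))
      ((fderiv ℝ f (t, x)).comp (ContinuousLinearMap.inr ℝ ℝ E)) x := by
  have h1 : HasFDerivAt (fun y : E => (t, y)) (ContinuousLinearMap.inr ℝ ℝ E) x :=
    (hasFDerivAt_const t x).prodMk (hasFDerivAt_id x)
  exact hf.hasFDerivAt.comp x h1

lemma aux_comp_proj {n : ℕ} {f : ℝ → EuclideanSpace ℝ (Fin n)} {t : ℝ}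
    {f' : EuclideanSpace ℝ (Fin n)} (hf : HasDerivAt f f' t) (i : Fin n) :
    HasDerivAt (fun τ => f τ i) (f' i) t := by
  have := ((EuclideanSpace.proj (𝕜 := ℝ) i).hasFDerivAt (x := f t)).comp_hasDerivAt t hf
  exact this

end Aux

section Grad

lemma decomp (e : E2) :
    e = e 0 • EuclideanSpace.single 0 1 + e 1 • EuclideanSpace.single 1 1 := by
  ext j
  fin_cases j <;> simp [EuclideanSpace.single_apply]

lemma inner_sgrad (f : E2 → ℝ) (x e : E2) : ⟪sgrad f x, e⟫ = fderiv ℝ f x e := by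
  have h := decomp e
  conv_rhs => rw [h]
  rw [map_add, _root_.map_smul, _root_.map_smul]
  simp only [PiLp.inner_apply, RCLike.inner_apply, starRingEnd_apply, star_trivial,
    Fin.sum_univ_two, sgrad, pd, smul_eq_mul]

lemma sgrad_combo (a c : ℝ) (f h : E2 → ℝ) (x : E2) (hf : DifferentiableAt ℝ f x)
    (hh : DifferentiableAt ℝ h x) :
    sgrad (fun y => a * f y + c * h y) x = a • sgrad f x + c • sgrad h x := by
  ext i
  have heq : fderiv ℝ (fun y => a * f y + c * h y) x = a • fderiv ℝ f x + c • fderiv ℝ h x := by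
    rw [fderiv_fun_add ((hf.const_mul a)) ((hh.const_mul c)), fderiv_const_mul hf,
      fderiv_const_mul hh]
  simp [sgrad, pd, heq]

end Grad

section Main
variable (u : ℝ × E2 → E2) (γ : ℝ × ℝ → E2) (D : ℝ × E2 → ℝ) (g d : ℝ) (b : E2 → ℝ)

/-- velocity along the loop -/
noncomputable def Vv : ℝ × ℝ → E2 := fun p => u (p.1, γ p)
/-- s-derivative of the loop -/
noncomputable def Ww : ℝ × ℝ → E2 := fun p => fderiv ℝ γ p (0, 1)
/-- circulation integrand -/
noncomputable def Ff : ℝ × ℝ → ℝ := fun p => ⟪Vv u γ p, Ww γ p⟫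
/-- t-derivative of the integrand -/
noncomputable def Ft : ℝ × ℝ → ℝ := fun p => fderiv ℝ (Ff u γ) p (1, 0)
/-- the material derivative of `u` along the flow -/
noncomputable def Aa : ℝ × ℝ → E2 := fun p => fderiv ℝ u (p.1, γ p) (1, Vv u γ p)
/-- √D -/
noncomputable def Ss : ℝ × E2 → ℝ := fun p => Real.sqrt (D p)
/-- ∂ₜ√D -/
noncomputable def S1 : ℝ × E2 → ℝ := fun p => fderiv ℝ (Ss D) p (1, (0 : E2))
/-- ∂ₜ²√D -/
noncomputable def S2 : ℝ × E2 → ℝ := fun p => fderiv ℝ (S1 D) p (1, (0 : E2))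
/-- the potential -/
noncomputable def Qq : ℝ × E2 → ℝ :=
  fun p => g * (D p - b p.2) + (d ^ 2 / 6) * ((Ss D p)⁻¹ * S2 D p)
/-- Bernoulli-type function whose s-derivative is ∂ₜ of the integrand -/
noncomputable def Hh : ℝ × ℝ → ℝ :=
  fun p => -(Qq D g d b (p.1, γ p)) + ⟪Vv u γ p, Vv u γ p⟫ / 2

variable {u γ D g d b}
variable (hu : ContDiff ℝ (⊤ : ℕ∞) u) (hγ : ContDiff ℝ (⊤ : ℕ∞) γ) (hD : ContDiff ℝ (⊤ : ℕ∞) D)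
  (hb : ContDiff ℝ (⊤ : ℕ∞) b) (hDpos : ∀ p, 0 < D p)

local notation "∞" => ((⊤ : ℕ∞) : WithTop ℕ∞)

include hu hγ in
lemma smooth_Vv : ContDiff ℝ ∞ (Vv u γ) :=
  ((hu.of_le (by simp) : ContDiff ℝ ∞ u)).comp
    (contDiff_fst.prodMk ((hγ.of_le (by simp) : ContDiff ℝ ∞ γ)))

include hγ in
lemma smooth_Ww : ContDiff ℝ ∞ (Ww γ) :=
  (((hγ.of_le (by simp) : ContDiff ℝ ∞ γ)).fderiv_right (by simp)).clm_apply contDiff_const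

include hu hγ in
lemma smooth_Ff : ContDiff ℝ ∞ (Ff u γ) :=
  (smooth_Vv hu hγ).inner ℝ (smooth_Ww hγ)

include hu hγ in
lemma smooth_Ft : ContDiff ℝ ∞ (Ft u γ) :=
  ((smooth_Ff hu hγ).fderiv_right (by simp)).clm_apply contDiff_const

include hD hDpos in
lemma smooth_Ss : ContDiff ℝ ∞ (Ss D) := by
  rw [contDiff_iff_contDiffAt]
  exact fun p => (Real.contDiffAt_sqrt (hDpos p).ne').comp p
    ((hD.of_le (by simp) : ContDiff ℝ ∞ D)).contDiffAt

include hD hDpos in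
lemma smooth_S1 : ContDiff ℝ ∞ (S1 D) :=
  (((smooth_Ss hD hDpos).fderiv_right (by simp)).clm_apply contDiff_const)

include hD hDpos in
lemma smooth_S2 : ContDiff ℝ ∞ (S2 D) :=
  (((smooth_S1 hD hDpos).fderiv_right (by simp)).clm_apply contDiff_const)

include hD hDpos hb in
lemma smooth_Qq : ContDiff ℝ ∞ (Qq D g d b) := by
  refine (contDiff_const.mul (((hD.of_le (by simp) : ContDiff ℝ ∞ D)).sub
    (((hb.of_le (by simp) : ContDiff ℝ ∞ b)).comp contDiff_snd))).add
    (contDiff_const.mul (((smooth_Ss hD hDpos).inv ?_).mul (smooth_S2 hD hDpos)))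
  exact fun p => (Real.sqrt_pos.2 (hDpos p)).ne'

include hu hγ hD hDpos hb in
lemma smooth_Hh : ContDiff ℝ ∞ (Hh u γ D g d b) :=
  (((smooth_Qq hD hb hDpos).comp
      (contDiff_fst.prodMk ((hγ.of_le (by simp) : ContDiff ℝ ∞ γ)))).neg).add
    (((smooth_Vv hu hγ).inner ℝ (smooth_Vv hu hγ)).div_const 2)

include hγ in
lemma sdLoop_eq (t s : ℝ) : sdLoop γ t s = Ww γ (t, s) := by
  ext i
  have h : HasDerivAt (fun σ => γ (t, σ)) (fderiv ℝ γ (t, s) (0, 1)) s :=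
    aux_snd (hγ.differentiable (by simp)).differentiableAt
  exact (aux_comp_proj h i).deriv

include hγ in
lemma tdLoop_eq (t s : ℝ) : tdLoop γ t s = fderiv ℝ γ (t, s) (1, 0) := by
  ext i
  have h : HasDerivAt (fun τ => γ (τ, s)) (fderiv ℝ γ (t, s) (1, 0)) t :=
    aux_fst (hγ.differentiable (by simp)).differentiableAt
  exact (aux_comp_proj h i).deriv

include hγ in
lemma Vv_eq (hflow : ∀ t s, tdLoop γ t s = u (t, γ (t, s))) (p : ℝ × ℝ) :
    Vv u γ p = fderiv ℝ γ p (1, 0) := by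
  obtain ⟨t, s⟩ := p
  have : Vv u γ (t, s) = u (t, γ (t, s)) := rfl
  rw [this, ← hflow t s, tdLoop_eq hγ]

include hu hγ in
lemma hasDeriv_Vv_t (hflow : ∀ t s, tdLoop γ t s = u (t, γ (t, s))) (t s : ℝ) :
    HasDerivAt (fun τ => Vv u γ (τ, s)) (Aa u γ (t, s)) t := by
  have hγt : HasDerivAt (fun τ => γ (τ, s)) (fderiv ℝ γ (t, s) (1, 0)) t :=
    aux_fst (hγ.differentiable (by simp)).differentiableAt
  rw [← Vv_eq hγ hflow (t, s)] at hγt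
  have hc : HasDerivAt (fun τ : ℝ => (τ, γ (τ, s))) ((1 : ℝ), Vv u γ (t, s)) t :=
    (hasDerivAt_id t).prodMk hγt
  exact ((hu.differentiable (by simp)) _).hasFDerivAt.comp_hasDerivAt t hc

include hu in
lemma Aa_eq (t s : ℝ) :
    Aa u γ (t, s) = tdV u t (γ (t, s)) + advV u u t (γ (t, s)) := by
  ext i
  set x := γ (t, s) with hx
  have hdu : DifferentiableAt ℝ u (t, x) := (hu.differentiable (by simp)).differentiableAt
  have h1 : HasDerivAt (fun τ => u (τ, x)) (fderiv ℝ u (t, x) (1, 0)) t := aux_fst hdu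
  have htd : tdV u t x i = fderiv ℝ u (t, x) (1, 0) i := (aux_comp_proj h1 i).deriv
  have h2 := aux_snd' hdu
  have h2i : HasFDerivAt (fun y => u (t, y) i)
      ((EuclideanSpace.proj (𝕜 := ℝ) i).comp
        ((fderiv ℝ u (t, x)).comp (ContinuousLinearMap.inr ℝ ℝ E2))) x :=
    (EuclideanSpace.proj (𝕜 := ℝ) i).hasFDerivAt.comp x h2
  have hadv : advV u u t x i = fderiv ℝ u (t, x) (0, u (t, x)) i := by
    show fderiv ℝ (fun y => u (t, y) i) x (u (t, x)) = _
    rw [h2i.fderiv]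
    rfl
  have hv : Vv u γ (t, s) = u (t, x) := rfl
  have hsplit : ((1 : ℝ), u (t, x)) = ((1 : ℝ), (0 : E2)) + ((0 : ℝ), u (t, x)) := by simp
  show fderiv ℝ u (t, x) (1, Vv u γ (t, s)) i = (tdV u t x + advV u u t x) i
  rw [hv, hsplit, map_add]
  show (fderiv ℝ u (t, x)) (1, 0) i + (fderiv ℝ u (t, x)) (0, u (t, x)) i
    = tdV u t x i + advV u u t x i
  rw [htd, hadv]

include hγ in
lemma hasDeriv_Ww_t (t s : ℝ) :
    HasDerivAt (fun τ => Ww γ (τ, s))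
      (fderiv ℝ (fderiv ℝ γ) (t, s) (1, 0) (0, 1)) t := by
  have hG : ContDiff ℝ ∞ (fderiv ℝ γ) :=
    ((hγ.of_le (by simp) : ContDiff ℝ ∞ γ)).fderiv_right (by simp)
  have h : HasDerivAt (fun τ => fderiv ℝ γ (τ, s)) (fderiv ℝ (fderiv ℝ γ) (t, s) (1, 0)) t :=
    aux_fst (hG.differentiable (by simp)).differentiableAt
  have := (ContinuousLinearMap.apply ℝ E2 ((0 : ℝ), (1 : ℝ))).hasFDerivAt.comp_hasDerivAt t h
  exact this

include hγ in
lemma hasDeriv_Vv_s (hflow : ∀ t s, tdLoop γ t s = u (t, γ (t, s))) (t s : ℝ) :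
    HasDerivAt (fun σ => Vv u γ (t, σ))
      (fderiv ℝ (fderiv ℝ γ) (t, s) (1, 0) (0, 1)) s := by
  have hG : ContDiff ℝ ∞ (fderiv ℝ γ) :=
    ((hγ.of_le (by simp) : ContDiff ℝ ∞ γ)).fderiv_right (by simp)
  have h : HasDerivAt (fun σ => fderiv ℝ γ (t, σ)) (fderiv ℝ (fderiv ℝ γ) (t, s) (0, 1)) s :=
    aux_snd (hG.differentiable (by simp)).differentiableAt
  have h2 := (ContinuousLinearMap.apply ℝ E2 ((1 : ℝ), (0 : ℝ))).hasFDerivAt.comp_hasDerivAt s h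
  have hfun : (fun σ => Vv u γ (t, σ)) = fun σ => fderiv ℝ γ (t, σ) (1, 0) :=
    funext fun σ => Vv_eq hγ hflow (t, σ)
  have hsymm : fderiv ℝ (fderiv ℝ γ) (t, s) (0, 1) (1, 0)
      = fderiv ℝ (fderiv ℝ γ) (t, s) (1, 0) (0, 1) := by
    refine second_derivative_symmetric (f := γ) (f' := fderiv ℝ γ) (x := (t, s))
      (fun y => ((hγ.differentiable (by simp)) y).hasFDerivAt) ?_ _ _
    exact ((hG.differentiable (by simp)) _).hasFDerivAt
  rw [hfun]
  rw [← hsymm]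
  exact h2

include hu hγ in
lemma Ft_eq (hflow : ∀ t s, tdLoop γ t s = u (t, γ (t, s))) (t s : ℝ) :
    Ft u γ (t, s) = ⟪Aa u γ (t, s), Ww γ (t, s)⟫
      + ⟪Vv u γ (t, s), fderiv ℝ (fderiv ℝ γ) (t, s) (1, 0) (0, 1)⟫ := by
  have h1 := hasDeriv_Vv_t hu hγ hflow t s
  have h2 := hasDeriv_Ww_t hγ t s
  have h := h1.inner ℝ h2
  have h' : HasDerivAt (fun τ => Ff u γ (τ, s)) (Ft u γ (t, s)) t :=
    aux_fst ((smooth_Ff hu hγ).differentiable (by simp)).differentiableAt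
  have := h'.unique h
  rw [this]
  ring

lemma sqrt_deriv_eq (t : ℝ) (y : E2) (hD : ContDiff ℝ (⊤ : ℕ∞) D) (hDpos : ∀ p, 0 < D p) :
    (Real.sqrt (D (t, y)))⁻¹
        * deriv (fun τ => deriv (fun σ => Real.sqrt (D (σ, y))) τ) t
      = (Ss D (t, y))⁻¹ * S2 D (t, y) := by
  have hS := smooth_Ss hD hDpos
  have hS1 := smooth_S1 hD hDpos
  have inner_eq : (fun τ => deriv (fun σ => Real.sqrt (D (σ, y))) τ)
      = fun τ => S1 D (τ, y) := by
    funext τ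
    exact (aux_fst (f := Ss D) (hS.differentiable (by simp)).differentiableAt).deriv
  rw [inner_eq]
  have : deriv (fun τ => S1 D (τ, y)) t = S2 D (t, y) :=
    (aux_fst (f := S1 D) (hS1.differentiable (by simp)).differentiableAt).deriv
  rw [this]
  rfl

set_option linter.unusedSectionVars false in
include hu hγ hD hb hDpos in
lemma grad_eq
    (heq : ∀ (t : ℝ) (x : E2),
      tdV u t x + advV u u t x =
        -(g • sgrad (fun y => D (t, y) - b y) x)
        - (d ^ 2 / 6) • sgrad (fun y => (Real.sqrt (D (t, y)))⁻¹ *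
            deriv (fun τ => deriv (fun σ => Real.sqrt (D (σ, y))) τ) t) x)
    (t s : ℝ) :
    sgrad (fun y => Qq D g d b (t, y)) (γ (t, s)) = -(Aa u γ (t, s)) := by
  set x := γ (t, s) with hx
  have hincl : ContDiff ℝ ∞ (fun y : E2 => ((t, y) : ℝ × E2)) :=
    contDiff_const.prodMk contDiff_id
  have hf1 : DifferentiableAt ℝ (fun y => D (t, y) - b y) x :=
    ((((hD.of_le (by simp) : ContDiff ℝ ∞ D)).comp hincl).sub
      ((hb.of_le (by simp) : ContDiff ℝ ∞ b))).differentiable (by simp) x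
  have hf2 : DifferentiableAt ℝ (fun y : E2 => (Ss D (t, y))⁻¹ * S2 D (t, y)) x := by
    refine ((((smooth_Ss hD hDpos).comp hincl).inv ?_).mul
      ((smooth_S2 hD hDpos).comp hincl)).differentiable (by simp) x
    exact fun y => (Real.sqrt_pos.2 (hDpos (t, y))).ne'
  have hcombo := sgrad_combo g (d ^ 2 / 6) _ _ x hf1 hf2
  have hQ : (fun y => Qq D g d b (t, y))
      = fun y => g * ((fun y => D (t, y) - b y) y)
        + (d ^ 2 / 6) * ((fun y : E2 => (Ss D (t, y))⁻¹ * S2 D (t, y)) y) := rfl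
  rw [hQ, hcombo]
  have hfun2 : (fun y => (Real.sqrt (D (t, y)))⁻¹ *
      deriv (fun τ => deriv (fun σ => Real.sqrt (D (σ, y))) τ) t)
      = fun y : E2 => (Ss D (t, y))⁻¹ * S2 D (t, y) :=
    funext fun y => sqrt_deriv_eq t y hD hDpos
  have hA : Aa u γ (t, s)
      = -(g • sgrad (fun y => D (t, y) - b y) x)
        - (d ^ 2 / 6) • sgrad (fun y : E2 => (Ss D (t, y))⁻¹ * S2 D (t, y)) x := by
    rw [Aa_eq hu t s, heq t x, hfun2]
  rw [hA]
  abel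

include hu hγ hD hb hDpos in
lemma hasDeriv_Hh_s
    (heq : ∀ (t : ℝ) (x : E2),
      tdV u t x + advV u u t x =
        -(g • sgrad (fun y => D (t, y) - b y) x)
        - (d ^ 2 / 6) • sgrad (fun y => (Real.sqrt (D (t, y)))⁻¹ *
            deriv (fun τ => deriv (fun σ => Real.sqrt (D (σ, y))) τ) t) x)
    (hflow : ∀ t s, tdLoop γ t s = u (t, γ (t, s))) (t s : ℝ) :
    HasDerivAt (fun σ => Hh u γ D g d b (t, σ)) (Ft u γ (t, s)) s := by
  have hincl : ContDiff ℝ ∞ (fun y : E2 => ((t, y) : ℝ × E2)) :=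
    contDiff_const.prodMk contDiff_id
  have hγs : HasDerivAt (fun σ => γ (t, σ)) (Ww γ (t, s)) s :=
    aux_snd (hγ.differentiable (by simp)).differentiableAt
  have hQt : DifferentiableAt ℝ (fun y => Qq D g d b (t, y)) (γ (t, s)) :=
    ((smooth_Qq hD hb hDpos).comp hincl).differentiable (by simp) _
  have hQ : HasDerivAt (fun σ => Qq D g d b (t, γ (t, σ)))
      (fderiv ℝ (fun y => Qq D g d b (t, y)) (γ (t, s)) (Ww γ (t, s))) s :=
    by have := hQt.hasFDerivAt.comp_hasDerivAt s hγs; exact this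
  have hVs := hasDeriv_Vv_s hγ hflow t s
  have hsum := (hQ.neg).add ((hVs.inner ℝ hVs).div_const 2)
  have hval : Ft u γ (t, s)
      = -(fderiv ℝ (fun y => Qq D g d b (t, y)) (γ (t, s)) (Ww γ (t, s)))
        + (⟪Vv u γ (t, s), fderiv ℝ (fderiv ℝ γ) (t, s) (1, 0) (0, 1)⟫
          + ⟪fderiv ℝ (fderiv ℝ γ) (t, s) (1, 0) (0, 1), Vv u γ (t, s)⟫) / 2 := by
    rw [Ft_eq hu hγ hflow t s, ← inner_sgrad, grad_eq hu hγ hD hb hDpos heq t s,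
      real_inner_comm (fderiv ℝ (fderiv ℝ γ) (t, s) (1, 0) (0, 1)) (Vv u γ (t, s)),
      inner_neg_left]
    ring
  rw [hval]
  exact hsum

lemma Hh_per (hper : ∀ t s, γ (t, s + 2 * Real.pi) = γ (t, s)) (t s : ℝ) :
    Hh u γ D g d b (t, s + 2 * Real.pi) = Hh u γ D g d b (t, s) := by
  simp only [Hh, Vv, hper t s]

include hu hγ hD hb hDpos in
lemma integral_Ft_zero
    (heq : ∀ (t : ℝ) (x : E2),
      tdV u t x + advV u u t x =
        -(g • sgrad (fun y => D (t, y) - b y) x)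
        - (d ^ 2 / 6) • sgrad (fun y => (Real.sqrt (D (t, y)))⁻¹ *
            deriv (fun τ => deriv (fun σ => Real.sqrt (D (σ, y))) τ) t) x)
    (hflow : ∀ t s, tdLoop γ t s = u (t, γ (t, s)))
    (hper : ∀ t s, γ (t, s + 2 * Real.pi) = γ (t, s)) (t : ℝ) :
    (∫ s in (0 : ℝ)..(2 * Real.pi), Ft u γ (t, s)) = 0 := by
  have hcont : Continuous fun σ => Ft u γ (t, σ) :=
    (smooth_Ft hu hγ).continuous.comp (by continuity)
  have hftc := intervalIntegral.integral_eq_sub_of_hasDerivAt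
    (f := fun σ => Hh u γ D g d b (t, σ)) (f' := fun σ => Ft u γ (t, σ))
    (fun σ _ => hasDeriv_Hh_s hu hγ hD hb hDpos heq hflow t σ)
    (hcont.intervalIntegrable 0 (2 * Real.pi))
  rw [hftc]
  beta_reduce
  rw [show (2 * Real.pi : ℝ) = 0 + 2 * Real.pi by ring, Hh_per hper, sub_self]

end Main

/-- Kelvin circulation theorem for the 1L√D motion equation
`∂ₜu + (u·∇)u = -g∇(D-b) - (d²/6)∇(D^{-1/2} ∂ₜ²√D)`:
the circulation of `u` around a material loop advected by the flow is constant. -/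
theorem stmt7 (g d : ℝ) (b : EuclideanSpace ℝ (Fin 2) → ℝ) (hb : ContDiff ℝ (⊤ : ℕ∞) b)
    (u : ℝ × EuclideanSpace ℝ (Fin 2) → EuclideanSpace ℝ (Fin 2))
    (D : ℝ × EuclideanSpace ℝ (Fin 2) → ℝ)
    (hu : ContDiff ℝ (⊤ : ℕ∞) u) (hD : ContDiff ℝ (⊤ : ℕ∞) D) (hDpos : ∀ p, 0 < D p)
    (heq : ∀ (t : ℝ) (x : EuclideanSpace ℝ (Fin 2)),
      tdV u t x + advV u u t x =
        -(g • sgrad (fun y => D (t, y) - b y) x)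
        - (d ^ 2 / 6) • sgrad (fun y => (Real.sqrt (D (t, y)))⁻¹ *
            deriv (fun τ => deriv (fun σ => Real.sqrt (D (σ, y))) τ) t) x)
    (γ : ℝ × ℝ → EuclideanSpace ℝ (Fin 2)) (hγ : ContDiff ℝ (⊤ : ℕ∞) γ)
    (hper : ∀ t s, γ (t, s + 2 * Real.pi) = γ (t, s))
    (hflow : ∀ t s, tdLoop γ t s = u (t, γ (t, s))) :
    ∀ t₁ t₂ : ℝ,
      (∫ s in (0 : ℝ)..(2 * Real.pi),
        (inner ℝ (u (t₁, γ (t₁, s))) (sdLoop γ t₁ s) : ℝ)) =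
      ∫ s in (0 : ℝ)..(2 * Real.pi),
        (inner ℝ (u (t₂, γ (t₂, s))) (sdLoop γ t₂ s) : ℝ) := by
  intro t₁ t₂
  have hFfc : Continuous (Ff u γ) := (smooth_Ff hu hγ).continuous
  have hFtc : Continuous (Ft u γ) := (smooth_Ft hu hγ).continuous
  set G : ℝ → ℝ := fun t => ∫ s in (0 : ℝ)..(2 * Real.pi), Ff u γ (t, s) with hG
  have key : ∀ t₀ : ℝ, HasDerivAt G 0 t₀ := by
    intro t₀
    obtain ⟨C, hC⟩ := ((isCompact_closedBall t₀ 1).prod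
      (isCompact_uIcc (a := (0 : ℝ)) (b := 2 * Real.pi))).exists_bound_of_continuousOn
      hFtc.continuousOn
    have hmain := intervalIntegral.hasDerivAt_integral_of_dominated_loc_of_deriv_le
      (F := fun t s => Ff u γ (t, s)) (F' := fun t s => Ft u γ (t, s))
      (bound := fun _ => C) (a := (0 : ℝ)) (b := 2 * Real.pi) (x₀ := t₀)
      (μ := MeasureTheory.volume) (Metric.ball_mem_nhds t₀ one_pos)
      (Filter.Eventually.of_forall fun t =>
        ((hFfc.comp (by continuity : Continuous fun s : ℝ => ((t, s) : ℝ × ℝ)))).aestronglyMeasurable)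
      ((hFfc.comp (by continuity : Continuous fun s : ℝ => ((t₀, s) : ℝ × ℝ))).intervalIntegrable
        0 (2 * Real.pi))
      ((hFtc.comp (by continuity : Continuous fun s : ℝ => ((t₀, s) : ℝ × ℝ))).aestronglyMeasurable)
      (MeasureTheory.ae_of_all _ fun s hs x hx =>
        hC (x, s) ⟨Metric.ball_subset_closedBall hx, Set.uIoc_subset_uIcc hs⟩)
      (intervalIntegrable_const)
      (MeasureTheory.ae_of_all _ fun s hs x hx =>
        aux_fst (((smooth_Ff hu hγ).differentiable (by simp)).differentiableAt))
    have hzero := integral_Ft_zero hu hγ hD hb hDpos heq hflow hper t₀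
    have hder := hmain.2
    beta_reduce at hder
    rw [hzero] at hder
    exact hder
  have hconst : G t₁ = G t₂ :=
    is_const_of_deriv_eq_zero (fun t => (key t).differentiableAt)
      (fun t => (key t).deriv) t₁ t₂
  have hrw : ∀ t : ℝ, (∫ s in (0 : ℝ)..(2 * Real.pi),
      (inner ℝ (u (t, γ (t, s))) (sdLoop γ t s) : ℝ)) = G t := by
    intro t
    apply intervalIntegral.integral_congr
    intro s hs
    show (inner ℝ (u (t, γ (t, s))) (sdLoop γ t s) : ℝ) = Ff u γ (t, s)
    rw [sdLoop_eq hγ]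
    rfl
  rw [hrw t₁, hrw t₂, hconst]
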